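/- For every m ≥ 3, the 2m-qubit state Ψ_m = (T†)^{⊗m}|GHZ(m)⟩ with |GHZ(m)⟩ = Σ_{i=0}^{3} |i⟩^{⊗m} ∈ (ℂ⁴)^{⊗m} is 3-uniform, given that Ψ₃ is 3-uniform. -/

import Mathlib

open Matrix Complex
open scoped BigOperators
noncomputable section

/-- Reduced density matrix of `ψ` on the sites in `S` (up to a uniform positive factor). -/
def red {n D : ℕ} (ψ : (Fin n → Fin D) → ℂ) (S : Finset (Fin n)) (a b : Fin n → Fin D) : ℂ :=
  ∑ f : Fin n → Fin D,
    ψ (fun i => if i ∈ S then a i else f i) *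
      (starRingEnd ℂ) (ψ (fun i => if i ∈ S then b i else f i))

/-- The reduction of `ψ` to the sites in `S` is proportional to the identity. -/
def UniformOn {n D : ℕ} (ψ : (Fin n → Fin D) → ℂ) (S : Finset (Fin n)) : Prop :=
  ∃ c : ℂ, ∀ a b, red ψ S a b = if (∀ i ∈ S, a i = b i) then c else 0

/-- `ψ` is `r`-uniform. -/
def IsUniform {n D : ℕ} (r : ℕ) (ψ : (Fin n → Fin D) → ℂ) : Prop :=
  ∀ S : Finset (Fin n), S.card = r → UniformOn ψ S

/-- The unitary matrix `T` from the paper. -/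
def Tmat : Matrix (Fin 4) (Fin 4) ℂ :=
  (Real.sqrt 2 : ℂ)⁻¹ • !![1, 0, 0, 1; 0, I, I, 0; 0, -1, 1, 0; I, 0, 0, -I]

/-- The generalized GHZ state `Σ_{i=0}^{3} |i⟩^{⊗m} ∈ (ℂ⁴)^{⊗m}`. -/
def GHZ (m : ℕ) (g : Fin m → Fin 4) : ℂ :=
  if ∃ c : Fin 4, ∀ k, g k = c then 1 else 0

/-- Grouping the `2m` qubit indices in pairs into `m` ququad indices, via `|i⟩|j⟩ ↦ |2i+j⟩`. -/
def quad {m : ℕ} (f : Fin (2 * m) → Fin 2) (k : Fin m) : Fin 4 :=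
  ⟨2 * (f ⟨2 * k.val, by have := k.isLt; omega⟩).val +
      (f ⟨2 * k.val + 1, by have := k.isLt; omega⟩).val,
    by have := (f ⟨2 * k.val, by have := k.isLt; omega⟩).isLt;
       have := (f ⟨2 * k.val + 1, by have := k.isLt; omega⟩).isLt; omega⟩

/-- The `2m`-qubit state `Ψ_m = (T†)^{⊗m} |GHZ(m)⟩`. -/
def Psi (m : ℕ) (f : Fin (2 * m) → Fin 2) : ℂ :=
  ∑ g : Fin m → Fin 4, (∏ k : Fin m, Tmatᴴ (quad f k) (g k)) * GHZ m g

/-!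
For `m = 3` there is nothing to prove. For `m ≥ 4`, write `Ψ_m = ∑_c t_c^{⊗m}`, where
`t_c = Tcol c` is the `c`-th column of `T†` read as a two-qubit state. The reduction of such a
sum of product states to a set `S` of qubits factors, ququad by ququad, into cross reductions
of `t_c` against `t_{c'}`. Three qubits miss some ququad entirely, and there the orthonormality
of the columns kills every term with `c ≠ c'`. The rows of `T` are Bell states, so a ququad
meeting `S` in one qubit contributes the identity; at most one ququad lies inside `S`, and for
it the sum over `c` gives `4 · 1` because the rows of `T` are orthonormal. Hence the reduction
is `4 · 1`.
-/

open Finset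

def redCross {n D : ℕ} (ψ χ : (Fin n → Fin D) → ℂ) (S : Finset (Fin n))
    (a b : Fin n → Fin D) : ℂ :=
  ∑ f : Fin n → Fin D,
    ψ (fun i => if i ∈ S then a i else f i) *
      (starRingEnd ℂ) (χ (fun i => if i ∈ S then b i else f i))

lemma red_eq_redCross {n D : ℕ} (ψ : (Fin n → Fin D) → ℂ) : red ψ = redCross ψ ψ := rfl

section BlockProduct

variable {m r n D : ℕ} (e : Fin m × Fin r ≃ Fin n)

def block {α : Type*} (f : Fin n → α) (k : Fin m) : Fin r → α := fun j => f (e (k, j))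

def blockSet (S : Finset (Fin n)) (k : Fin m) : Finset (Fin r) := {j | e (k, j) ∈ S}

def blockProduct {C : Type*} [Fintype C] (v : C → (Fin r → Fin D) → ℂ)
    (f : Fin n → Fin D) : ℂ :=
  ∑ c, ∏ k, v c (block e f k)

lemma sum_prod_block {R α : Type*} [CommSemiring R] [Fintype α]
    (h : Fin m → (Fin r → α) → R) :
    ∑ f : Fin n → α, ∏ k, h k (block e f k) = ∏ k, ∑ φ : Fin r → α, h k φ := by
  rw [Fintype.prod_sum]
  exact Fintype.sum_equiv ((Equiv.arrowCongr e.symm (Equiv.refl α)).trans (Equiv.curry _ _ _))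
    _ _ fun f => rfl

lemma block_piecewise {α : Type*} (S : Finset (Fin n)) (a f : Fin n → α) (k : Fin m) :
    block e (fun i => if i ∈ S then a i else f i) k =
      fun j => if j ∈ blockSet e S k then block e a k j else block e f k j := by
  funext j
  simp [block, blockSet]

lemma red_blockProduct {C : Type*} [Fintype C] (v : C → (Fin r → Fin D) → ℂ)
    (S : Finset (Fin n)) (a b : Fin n → Fin D) :
    red (blockProduct e v) S a b =
      ∑ c, ∑ c', ∏ k, redCross (v c) (v c') (blockSet e S k) (block e a k) (block e b k) := by
  simp only [red, blockProduct, block_piecewise, map_sum, map_prod, Fintype.sum_mul_sum,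
    ← prod_mul_distrib]
  rw [sum_comm]
  refine sum_congr rfl fun c _ => ?_
  rw [sum_comm]
  refine sum_congr rfl fun c' _ => ?_
  exact sum_prod_block e fun k φ =>
    v c (fun j => if j ∈ blockSet e S k then block e a k j else φ j) *
      (starRingEnd ℂ) (v c' (fun j => if j ∈ blockSet e S k then block e b k j else φ j))

lemma sum_card_blockSet (S : Finset (Fin n)) : ∑ k, (blockSet e S k).card = S.card := by
  calc ∑ k, (blockSet e S k).card = ∑ p : Fin m × Fin r, if e p ∈ S then 1 else 0 := by
        rw [Fintype.sum_prod_type]; simp [blockSet]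
    _ = ∑ i, if i ∈ S then 1 else 0 := e.sum_comp fun i => if i ∈ S then 1 else 0
    _ = S.card := by simp

lemma exists_blockSet_eq_empty {S : Finset (Fin n)} (hS : S.card < m) :
    ∃ k, blockSet e S k = ∅ := by
  by_contra! h
  have : m ≤ S.card :=
    calc m = ∑ _k : Fin m, 1 := by simp
      _ ≤ ∑ k, (blockSet e S k).card := sum_le_sum fun k _ => card_pos.mpr (h k)
      _ = S.card := sum_card_blockSet e S
  omega

lemma eq_of_blockSet_eq_univ {S : Finset (Fin n)} (hS : S.card < 2 * r) {k k' : Fin m}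
    (hk : blockSet e S k = univ) (hk' : blockSet e S k' = univ) : k = k' := by
  by_contra hne
  have : 2 * r ≤ S.card :=
    calc 2 * r = ∑ i ∈ {k, k'}, (blockSet e S i).card := by simp [sum_pair hne, hk, hk']; ring
      _ ≤ ∑ i, (blockSet e S i).card := sum_le_sum_of_subset (subset_univ _)
      _ = S.card := sum_card_blockSet e S
  omega

lemma prod_ite_blockSet (S : Finset (Fin n)) (a b : Fin n → Fin D) :
    ∏ k, (if ∀ j ∈ blockSet e S k, block e a k j = block e b k j then (1 : ℂ) else 0) =
      if ∀ i ∈ S, a i = b i then 1 else 0 := by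
  rw [prod_boole]
  congr 1
  simp only [mem_univ, true_implies, blockSet, block, mem_filter]
  rw [← e.forall_congr_right]
  simp [Prod.forall]

theorem uniformOn_blockProduct {C : Type*} [Fintype C]
    (v : C → (Fin r → Fin D) → ℂ)
    (horth : ∀ c c' a b, c ≠ c' → redCross (v c) (v c') ∅ a b = 0)
    (hproper : ∀ c T a b, T ≠ univ →
      red (v c) T a b = if ∀ j ∈ T, a j = b j then 1 else 0)
    (hfull : ∀ a b, ∑ c, red (v c) univ a b = if a = b then (Fintype.card C : ℂ) else 0)
    {S : Finset (Fin n)} {k₀ : Fin m} (hk₀ : blockSet e S k₀ = ∅)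
    (huniq : ∀ k k', blockSet e S k = univ → blockSet e S k' = univ → k = k') :
    UniformOn (blockProduct e v) S := by
  refine ⟨Fintype.card C, fun a b => ?_⟩
  set δ : Fin m → ℂ := fun k =>
    if ∀ j ∈ blockSet e S k, block e a k j = block e b k j then 1 else 0
  have hsum (k : Fin m) :
      ∑ c, red (v c) (blockSet e S k) (block e a k) (block e b k) = Fintype.card C * δ k := by
    by_cases hk : blockSet e S k = univ
    · simp [hk, hfull, δ, funext_iff]
    · simp [hproper _ _ _ _ hk, δ]
  obtain ⟨k₁, hk₁⟩ : ∃ k₁, ∀ k ≠ k₁, blockSet e S k ≠ univ := by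
    by_cases h : ∃ k₁, blockSet e S k₁ = univ
    · obtain ⟨k₁, h⟩ := h
      exact ⟨k₁, fun k hk hfk => hk (huniq _ _ hfk h)⟩
    · exact ⟨k₀, fun k _ hk => h ⟨k, hk⟩⟩
  calc red (blockProduct e v) S a b
      = ∑ c, ∏ k, red (v c) (blockSet e S k) (block e a k) (block e b k) := by
        rw [red_blockProduct]
        refine sum_congr rfl fun c _ => sum_eq_single c (fun c' _ hc' => ?_) (by simp)
        exact prod_eq_zero (mem_univ k₀) (by rw [hk₀]; exact horth _ _ _ _ hc'.symm)
    _ = ∑ c, red (v c) (blockSet e S k₁) (block e a k₁) (block e b k₁) *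
          ∏ k ∈ univ.erase k₁, δ k := by
        refine sum_congr rfl fun c _ => ?_
        rw [← mul_prod_erase _ _ (mem_univ k₁)]
        congr 1
        exact prod_congr rfl fun k hk => hproper _ _ _ _ (hk₁ k (ne_of_mem_erase hk))
    _ = Fintype.card C * ∏ k, δ k := by
        rw [← sum_mul, hsum, mul_assoc, mul_prod_erase _ _ (mem_univ k₁)]
    _ = _ := by rw [prod_ite_blockSet, mul_boole]

end BlockProduct

def pairSite (m : ℕ) : Fin m × Fin 2 ≃ Fin (2 * m) where
  toFun p := ⟨2 * p.1 + p.2, by omega⟩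
  invFun i := (⟨i / 2, by omega⟩, ⟨i % 2, by omega⟩)
  left_inv p := by ext <;> simp <;> omega
  right_inv i := by ext; simp; omega

def qubitPair : (Fin 2 → Fin 2) ≃ Fin 4 where
  toFun φ := ⟨2 * φ 0 + φ 1, by omega⟩
  invFun q := ![⟨q / 2, by omega⟩, ⟨q % 2, by omega⟩]
  left_inv φ := by ext i; fin_cases i <;> simp <;> omega
  right_inv q := by ext; simp; omega

def Tcol (c : Fin 4) (φ : Fin 2 → Fin 2) : ℂ := Tmatᴴ (qubitPair φ) c

lemma quad_eq_qubitPair {m : ℕ} (f : Fin (2 * m) → Fin 2) (k : Fin m) :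
    quad f k = qubitPair (block (pairSite m) f k) := by
  ext
  simp [quad, qubitPair, block, pairSite]

lemma GHZ_eq_sum {m : ℕ} (hm : 0 < m) (g : Fin m → Fin 4) :
    GHZ m g = ∑ c, if g = fun _ => c then 1 else 0 := by
  have : Nonempty (Fin m) := ⟨⟨0, hm⟩⟩
  by_cases h : ∃ c, ∀ k, g k = c
  · obtain ⟨c, hc⟩ := h
    obtain rfl : g = fun _ => c := funext hc
    simp [GHZ, funext_iff]
  · rw [GHZ, if_neg h]
    exact (sum_eq_zero fun c _ => if_neg fun hg => h ⟨c, fun k => by rw [hg]⟩).symm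

lemma Psi_eq_blockProduct {m : ℕ} (hm : 0 < m) : Psi m = blockProduct (pairSite m) Tcol := by
  funext f
  simp only [Psi, GHZ_eq_sum hm, mul_sum, mul_boole, blockProduct, Tcol, quad_eq_qubitPair]
  rw [sum_comm]
  simp

lemma ofReal_sqrt_two_sq : ((Real.sqrt 2 : ℝ) : ℂ) ^ 2 = 2 := by
  rw [← Complex.ofReal_pow, Real.sq_sqrt zero_le_two, Complex.ofReal_ofNat]

lemma Tmat_mul_conjTranspose : Tmat * Tmatᴴ = 1 := by
  ext i j
  fin_cases i <;> fin_cases j <;>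
    simp [Tmat, Matrix.mul_apply, Fin.sum_univ_four, Matrix.conjTranspose_apply] <;> ring_nf <;>
    simp [ofReal_sqrt_two_sq]

lemma Tmat_conjTranspose_mul : Tmatᴴ * Tmat = 1 := mul_eq_one_comm.mp Tmat_mul_conjTranspose

lemma redCross_Tcol_empty (c c' : Fin 4) (a b : Fin 2 → Fin 2) :
    redCross (Tcol c) (Tcol c') ∅ a b = if c = c' then 1 else 0 := by
  calc redCross (Tcol c) (Tcol c') ∅ a b = ∑ q, Tmat c' q * Tmatᴴ q c := by
        simp only [redCross, Tcol, notMem_empty, if_false]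
        rw [qubitPair.sum_comp fun q => Tmatᴴ q c * (starRingEnd ℂ) (Tmatᴴ q c')]
        simp [Matrix.conjTranspose_apply, mul_comm]
    _ = if c = c' then 1 else 0 := by
        rw [← Matrix.mul_apply, Tmat_mul_conjTranspose, Matrix.one_apply]
        exact if_congr eq_comm rfl rfl

lemma sum_red_Tcol_univ (a b : Fin 2 → Fin 2) :
    ∑ c, red (Tcol c) univ a b = if a = b then 4 else 0 :=
  calc ∑ c, red (Tcol c) univ a b
      = ∑ c, 4 * (Tmatᴴ (qubitPair a) c * Tmat c (qubitPair b)) := by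
        simp [red, Tcol, Matrix.conjTranspose_apply]
    _ = 4 * (Tmatᴴ * Tmat) (qubitPair a) (qubitPair b) := by rw [Matrix.mul_apply, mul_sum]
    _ = if a = b then 4 else 0 := by
        simp [Tmat_conjTranspose_mul, Matrix.one_apply]

lemma sum_fin_two_fun {M : Type*} [AddCommMonoid M] (g : (Fin 2 → Fin 2) → M) :
    ∑ φ, g φ = ∑ u, ∑ v, g ![u, v] := by
  rw [← Fintype.sum_prod_type']
  exact Fintype.sum_equiv (piFinTwoEquiv fun _ => Fin 2) _ _ fun φ => by
    congr 1; funext i; fin_cases i <;> rfl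

lemma red_Tcol_singleton (c : Fin 4) (j : Fin 2) (a b : Fin 2 → Fin 2) :
    red (Tcol c) {j} a b = if a j = b j then 1 else 0 := by
  obtain ⟨x, hx⟩ : ∃ x, a j = x := ⟨_, rfl⟩
  obtain ⟨y, hy⟩ : ∃ y, b j = y := ⟨_, rfl⟩
  rw [red, sum_fin_two_fun]
  fin_cases j <;> simp only [Fin.zero_eta, Fin.mk_one] at hx hy <;>
    simp [Tcol, qubitPair, Fin.sum_univ_two, hx, hy] <;>
    fin_cases x <;> fin_cases y <;> fin_cases c <;>
    simp [Tmat] <;> ring_nf <;> simp [ofReal_sqrt_two_sq]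

lemma red_Tcol_of_ne_univ (c : Fin 4) {T : Finset (Fin 2)} (a b : Fin 2 → Fin 2)
    (hT : T ≠ univ) :
    red (Tcol c) T a b = if ∀ j ∈ T, a j = b j then 1 else 0 := by
  obtain rfl | rfl | rfl : T = ∅ ∨ T = {0} ∨ T = {1} := by revert T; decide
  · simpa [red_eq_redCross] using redCross_Tcol_empty c c a b
  all_goals simpa using red_Tcol_singleton c _ a b

/-- For every `m ≥ 3`, given that `Ψ₃` is 3-uniform, the `2m`-qubit state
`Ψ_m = (T†)^{⊗m}|GHZ(m)⟩` is 3-uniform. -/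
theorem stmt_11 (m : ℕ) (hm : 3 ≤ m) (h3 : IsUniform 3 (Psi 3)) : IsUniform 3 (Psi m) := by
  obtain rfl | hm4 := hm.eq_or_lt
  · exact h3
  intro S hS
  obtain ⟨k₀, hk₀⟩ := exists_blockSet_eq_empty (pairSite m) (S := S) (by omega)
  rw [Psi_eq_blockProduct (by omega)]
  exact uniformOn_blockProduct (pairSite m) Tcol
    (fun c c' a b hcc' => by rw [redCross_Tcol_empty, if_neg hcc'])
    (fun c _ a b hT => red_Tcol_of_ne_univ c a b hT)
    (fun a b => by simpa using sum_red_Tcol_univ a b) hk₀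
    (fun _ _ => eq_of_blockSet_eq_univ (pairSite m) (by omega))
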